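/- arXiv:2509.01602 — 2 statements merged into one kernel-verified Lean document; each statement's English description precedes it below -/
import Mathlib

section
/- For every nonnegative integer n, the coefficient of U_0 in the expansion of U_1(t)^n in the basis of Chebyshev polynomials of the second kind equals 0 if n is odd, and equals n!/((n/2)! (n/2+1)!) if n is even. -/
open Polynomial Polynomial.Chebyshev
open scoped Nat

/-!
With `2 t z = z² + 1`, i.e. `t = (z + z⁻¹) / 2`, one has `U_j(t) (z² - 1) z^j = z^(2j+2) - 1`.
Multiplying the expansion by `(z² - 1) zⁿ` therefore gives the polynomial identity
`(z² + 1)ⁿ (z² - 1) = ∑ a_j (z^(n+j+2) - z^(n-j))`, in which only the `j = 0` term reaches the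
monomial `z^(n+2)`. So `a_0` is the difference of the coefficients of `zⁿ` and `z^(n+2)` in
`(z² + 1)ⁿ`: zero for odd `n`, and `C(2m, m) - C(2m, m+1)`, the Catalan number, for `n = 2m`.
-/

theorem U_eval_mul_sq_sub_one_mul_pow {R : Type*} [CommRing R] {t z : R}
    (h : 2 * t * z = z ^ 2 + 1) (j : ℕ) :
    (U R j).eval t * (z ^ 2 - 1) * z ^ j = z ^ (2 * j + 2) - 1 := by
  induction j using Nat.twoStepInduction with
  | zero => simp
  | one =>
    simp only [Nat.cast_one, U_one, eval_mul, eval_ofNat, eval_X]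
    linear_combination (z ^ 2 - 1) * h
  | more j ih ih' =>
    push_cast at ih' ⊢
    simp only [U_add_two, eval_sub, eval_mul, eval_ofNat, eval_X]
    linear_combination (z ^ 2 + 1) * ih' - z ^ 2 * ih +
      ((U R (j + 1)).eval t * (z ^ 2 - 1) * z ^ (j + 1)) * h

theorem coeff_X_sq_add_one_pow {R : Type*} [CommSemiring R] (n k : ℕ) :
    (((X : R[X]) ^ 2 + 1) ^ n).coeff k = if 2 ∣ k then (n.choose (k / 2) : R) else 0 := by
  have : ((X : R[X]) ^ 2 + 1) ^ n = expand R 2 ((X + 1) ^ n) := by simp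
  rw [this, coeff_expand two_pos, coeff_X_add_one_pow]

theorem cast_choose_sub_choose_succ {K : Type*} [Field K] [CharZero K] (m : ℕ) :
    ((2 * m).choose m : K) - (2 * m).choose (m + 1) = (2 * m)! / (m ! * (m + 1)!) := by
  have hsucc : ((2 * m).choose (m + 1) : K) * (m + 1) = (2 * m).choose m * m := by
    have h := Nat.choose_succ_right_eq (2 * m) m
    rw [show 2 * m - m = m by omega] at h
    exact_mod_cast h
  rw [Nat.cast_choose K (by omega : m ≤ 2 * m), show 2 * m - m = m by omega] at hsucc ⊢
  rw [Nat.factorial_succ]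
  push_cast at hsucc ⊢
  have hf : (m ! : K) ≠ 0 := by exact_mod_cast m.factorial_ne_zero
  have hm : (m : K) + 1 ≠ 0 := by exact_mod_cast m.succ_ne_zero
  field_simp at hsucc ⊢
  linear_combination -hsucc

theorem X_sq_add_one_pow_mul_X_sq_sub_one_eq_sum {K : Type*} [Field K] [CharZero K] {n : ℕ}
    {a : ℕ → K} (ha : ∀ t : K, (U K 1).eval t ^ n =
      ∑ j ∈ Finset.range (n + 1), a j * (U K j).eval t) :
    ((X : K[X]) ^ 2 + 1) ^ n * (X ^ 2 - 1) =
      ∑ j ∈ Finset.range (n + 1), C (a j) * (X ^ (n + j + 2) - X ^ (n - j)) := by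
  refine eq_of_infinite_eval_eq _ _ ((Set.finite_singleton 0).infinite_compl.mono fun z hz => ?_)
  replace hz : z ≠ 0 := hz
  obtain ⟨t, ht⟩ : ∃ t : K, 2 * t * z = z ^ 2 + 1 := ⟨(z ^ 2 + 1) / (2 * z), by field_simp⟩
  have hU : ∀ j ∈ Finset.range (n + 1),
      a j * (U K j).eval t * ((z ^ 2 - 1) * z ^ n) = a j * (z ^ (n + j + 2) - z ^ (n - j)) := by
    intro j hj
    have hjn : j ≤ n := Finset.mem_range_succ_iff.mp hj
    calc a j * (U K j).eval t * ((z ^ 2 - 1) * z ^ n)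
        = a j * ((U K j).eval t * (z ^ 2 - 1) * z ^ j * z ^ (n - j)) := by
          rw [mul_assoc _ (z ^ j), ← pow_add, Nat.add_sub_cancel' hjn]; ring
      _ = a j * (z ^ (n + j + 2) - z ^ (n - j)) := by
          rw [U_eval_mul_sq_sub_one_mul_pow ht, sub_mul, one_mul, ← pow_add]
          congr 3; omega
  simp only [eval_mul, eval_pow, eval_add, eval_sub, eval_X, eval_one, eval_finsetSum, eval_C]
  calc (z ^ 2 + 1) ^ n * (z ^ 2 - 1)
      = (U K 1).eval t ^ n * ((z ^ 2 - 1) * z ^ n) := by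
        rw [U_one, eval_mul, eval_ofNat, eval_X, ← ht]; ring
    _ = _ := by rw [ha, Finset.sum_mul]; exact Finset.sum_congr rfl hU

/-- The coefficient of `U 0` in the expansion of `(U 1)^n` in the basis of
Chebyshev polynomials of the second kind is `0` for odd `n` and the Catalan
number `n!/((n/2)!(n/2+1)!)` for even `n`. -/
theorem chebyshev_U_one_pow_coeff_zero (n : ℕ) (a : ℕ → ℝ)
    (ha : ∀ t : ℝ, (U ℝ 1).eval t ^ n =
      ∑ j ∈ Finset.range (n + 1), a j * (U ℝ j).eval t) :
    a 0 = if Odd n then 0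
      else (Nat.factorial n : ℝ) /
        (Nat.factorial (n / 2) * Nat.factorial (n / 2 + 1)) := by
  have hcoeff := congrArg (coeff · (n + 2)) (X_sq_add_one_pow_mul_X_sq_sub_one_eq_sum ha)
  have hexp : ∀ j, (n + 2 = n + j + 2 ↔ 0 = j) ∧ n + 2 ≠ n - j := fun j => by omega
  simp only [mul_sub, mul_one, coeff_sub, coeff_mul_X_pow, finsetSum_coeff, coeff_C_mul,
    coeff_X_pow, coeff_X_sq_add_one_pow, hexp, if_false, mul_ite, mul_zero, sub_zero,
    Finset.sum_ite_eq, Finset.mem_range, Nat.zero_lt_succ, if_true] at hcoeff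
  rw [← hcoeff]
  rcases Nat.even_or_odd' n with ⟨m, rfl | rfl⟩
  · have hodd : ¬Odd (2 * m) := Nat.not_odd_iff_even.mpr (even_two_mul m)
    rw [if_neg hodd, if_pos (dvd_mul_right 2 m), if_pos (by omega : 2 ∣ 2 * m + 2),
      show 2 * m / 2 = m by omega, show (2 * m + 2) / 2 = m + 1 by omega]
    exact cast_choose_sub_choose_succ m
  · rw [if_pos (odd_two_mul_add_one m), if_neg (by omega), if_neg (by omega), sub_zero]
end

section
/- Write U_d(t)^n = \sum_{j=0}^{dn} \alpha^{(d)}_{j,n} U_j(t) for the expansion of the n-th power of the d-th Chebyshev polynomial of the second kind in the Chebyshev basis. Then all coefficients \alpha^{(d)}_{j,n} are nonnegative integers, and \sum_{j=0}^{dn} \alpha^{(d)}_{j,n} \le (d+1)^{n-1}. -/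
open Polynomial Polynomial.Chebyshev

lemma U_mul_U_of_le (d m : ℕ) (h : d ≤ m) :
    U ℝ d * U ℝ m = ∑ k ∈ Finset.range (d + 1), U ℝ ((m : ℤ) + d - 2 * k) := by
  induction d using Nat.strong_induction_on generalizing m with
  | _ d ih =>
  match d with
  | 0 => simp
  | 1 =>
      rw [Finset.sum_range_succ, Finset.sum_range_one]
      push_cast
      rw [show (m:ℤ) + 1 - 0 = (m:ℤ) + 1 by ring, show (m:ℤ) + 1 - 2 = (m:ℤ) - 1 by ring,
        U_one]
      linear_combination -U_add_one ℝ (m : ℤ)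
  | (e+2) =>
      have ihe := ih e (by omega) m (by omega)
      have ihe1 := ih (e+1) (by omega) m (by omega)
      push_cast at ihe ihe1 ⊢
      have key : ∀ k : ℕ, (2*X) * U ℝ ((m:ℤ)+e+1-2*k)
          = U ℝ ((m:ℤ)+e+2-2*k) + U ℝ ((m:ℤ)+e-2*k) := by
        intro k
        have h2 := U_add_one ℝ ((m:ℤ)+e+1-2*k)
        rw [show (m:ℤ)+e+1-2*k+1 = (m:ℤ)+e+2-2*k by ring,
          show (m:ℤ)+e+1-2*k-1 = (m:ℤ)+e-2*k by ring] at h2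
        linear_combination -h2
      have step : U ℝ ((e:ℤ)+2) * U ℝ (m:ℤ)
          = 2*X*(U ℝ ((e:ℤ)+1) * U ℝ (m:ℤ)) - U ℝ (e:ℤ) * U ℝ (m:ℤ) := by
        linear_combination U ℝ (m:ℤ) * (U_add_two ℝ e)
      rw [step, ihe, ihe1, Finset.mul_sum]
      have e1 : ∀ k ∈ Finset.range (e+1+1), (2*X) * U ℝ ((m:ℤ)+(e+1)-2*k)
          = U ℝ ((m:ℤ)+e+2-2*k) + U ℝ ((m:ℤ)+e-2*k) := by
        intro k _
        rw [show (m:ℤ)+(↑e+1)-2*k = (m:ℤ)+e+1-2*k by ring]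
        exact key k
      rw [Finset.sum_congr rfl e1, Finset.sum_add_distrib,
        Finset.sum_range_succ (fun k => U ℝ ((m:ℤ)+e-2*k)),
        show Finset.range (e+2+1) = Finset.range (e+2+1) from rfl]
      rw [Finset.sum_range_succ (fun k => U ℝ ((m:ℤ)+(e+2)-2*k)) (e+2)]
      have : ∀ k ∈ Finset.range (e+2), U ℝ ((m:ℤ)+e+2-2*k) = U ℝ ((m:ℤ)+(e+2)-2*k) := by
        intro k _; ring_nf
      rw [Finset.sum_congr rfl this]
      push_cast
      rw [show (m:ℤ)+e-2*((e:ℤ)+1) = (m:ℤ)+((e:ℤ)+2)-2*((e:ℤ)+2) by ring]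
      ring

lemma U_mul_U_min (d m : ℕ) :
    U ℝ d * U ℝ m = ∑ k ∈ Finset.range (min d m + 1), U ℝ ((d : ℤ) + m - 2 * k) := by
  rcases le_total d m with h | h
  · rw [min_eq_left h, U_mul_U_of_le d m h]
    exact Finset.sum_congr rfl fun k _ => by rw [show (m:ℤ)+d-2*k = (d:ℤ)+m-2*k by ring]
  · rw [min_eq_right h, mul_comm, U_mul_U_of_le m d h]

lemma aux_expansion (d n : ℕ) (hn : 1 ≤ n) :
    ∃ α : ℕ → ℕ,
      (U ℝ d) ^ n = ∑ j ∈ Finset.range (d * n + 1), (α j : ℝ[X]) * U ℝ j ∧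
      ∑ j ∈ Finset.range (d * n + 1), α j ≤ (d + 1) ^ (n - 1) := by
  induction n, hn using Nat.le_induction with
  | base =>
      refine ⟨fun j => if j = d then 1 else 0, ?_, ?_⟩
      · beta_reduce
        rw [pow_one]
        simp only [Nat.cast_ite, Nat.cast_one, Nat.cast_zero, ite_mul, one_mul, zero_mul]
        rw [Finset.sum_ite_eq' (Finset.range (d*1+1)) d (fun j => U ℝ (j:ℤ))]
        rw [if_pos (by simp)]
      · beta_reduce
        rw [Finset.sum_ite_eq' (Finset.range (d*1+1)) d (fun _ => 1)]
        simp
  | succ n hn ih =>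
      obtain ⟨α, hexp, hsum⟩ := ih
      have hmul : d*(n+1) = d*n + d := by ring
      refine ⟨fun i => ∑ j ∈ Finset.range (d*n+1), ∑ k ∈ Finset.range (min d j + 1),
        if d + j - 2*k = i then α j else 0, ?_, ?_⟩
      · calc (U ℝ d)^(n+1) = U ℝ d * (U ℝ d)^n := by ring
          _ = ∑ j ∈ Finset.range (d*n+1), (α j : ℝ[X]) * (U ℝ d * U ℝ j) := by
              rw [hexp, Finset.mul_sum]; exact Finset.sum_congr rfl fun j _ => by ring
          _ = ∑ j ∈ Finset.range (d*n+1), ∑ k ∈ Finset.range (min d j + 1),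
                (α j : ℝ[X]) * U ℝ ((d:ℤ)+j-2*k) := by
              refine Finset.sum_congr rfl fun j _ => ?_
              rw [U_mul_U_min, Finset.mul_sum]
          _ = ∑ j ∈ Finset.range (d*n+1), ∑ k ∈ Finset.range (min d j + 1),
                ∑ i ∈ Finset.range (d*(n+1)+1),
                  if d + j - 2*k = i then (α j : ℝ[X]) * U ℝ i else 0 := by
              refine Finset.sum_congr rfl fun j hj => Finset.sum_congr rfl fun k hk => ?_
              rw [Finset.sum_ite_eq (Finset.range (d*(n+1)+1)) (d+j-2*k)
                (fun i => (α j : ℝ[X]) * U ℝ i)]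
              rw [Finset.mem_range] at hj hk
              rw [if_pos (by rw [Finset.mem_range]; omega)]
              congr 1
              have h2k : 2*k ≤ d + j := by omega
              push_cast [Nat.cast_sub h2k]
              ring_nf
          _ = ∑ i ∈ Finset.range (d*(n+1)+1), ∑ j ∈ Finset.range (d*n+1),
                ∑ k ∈ Finset.range (min d j + 1),
                  if d + j - 2*k = i then (α j : ℝ[X]) * U ℝ i else 0 := by
              rw [← Finset.sum_comm]
              exact Finset.sum_congr rfl fun j _ => Finset.sum_comm
          _ = ∑ i ∈ Finset.range (d*(n+1)+1),
                ((∑ j ∈ Finset.range (d*n+1), ∑ k ∈ Finset.range (min d j + 1),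
                  if d + j - 2*k = i then α j else 0 : ℕ) : ℝ[X]) * U ℝ i := by
              refine Finset.sum_congr rfl fun i _ => ?_
              push_cast
              rw [Finset.sum_mul]
              refine Finset.sum_congr rfl fun j _ => ?_
              rw [Finset.sum_mul]
              refine Finset.sum_congr rfl fun k _ => ?_
              split <;> simp
      · calc ∑ i ∈ Finset.range (d*(n+1)+1), ∑ j ∈ Finset.range (d*n+1),
              ∑ k ∈ Finset.range (min d j + 1), (if d + j - 2*k = i then α j else 0)
            = ∑ j ∈ Finset.range (d*n+1), ∑ k ∈ Finset.range (min d j + 1),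
              ∑ i ∈ Finset.range (d*(n+1)+1), (if d + j - 2*k = i then α j else 0) := by
              rw [Finset.sum_comm]
              exact Finset.sum_congr rfl fun j _ => Finset.sum_comm
          _ = ∑ j ∈ Finset.range (d*n+1), (min d j + 1) * α j := by
              refine Finset.sum_congr rfl fun j hj => ?_
              have : ∀ k ∈ Finset.range (min d j + 1),
                  ∑ i ∈ Finset.range (d*(n+1)+1), (if d + j - 2*k = i then α j else 0) = α j := by
                intro k hk
                rw [Finset.sum_ite_eq (Finset.range (d*(n+1)+1)) (d+j-2*k) (fun _ => α j)]
                rw [Finset.mem_range] at hj hk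
                rw [if_pos (by rw [Finset.mem_range]; omega)]
              rw [Finset.sum_congr rfl this, Finset.sum_const, Finset.card_range, smul_eq_mul]
          _ ≤ ∑ j ∈ Finset.range (d*n+1), (d + 1) * α j := by
              refine Finset.sum_le_sum fun j _ => ?_
              exact Nat.mul_le_mul_right _ (by omega)
          _ = (d + 1) * ∑ j ∈ Finset.range (d*n+1), α j := by rw [Finset.mul_sum]
          _ ≤ (d + 1) * (d + 1)^(n-1) := Nat.mul_le_mul_left _ hsum
          _ = (d + 1)^(n+1-1) := by
              rw [← pow_succ']
              congr 1
              omega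

/-- The expansion of `(U d)^n` in the Chebyshev basis has nonnegative integer
coefficients, whose sum is at most `(d+1)^(n-1)`. -/
theorem chebyshev_U_pow_coeffs_nonneg_sum_le (d n : ℕ) (hn : 1 ≤ n) :
    ∃ α : ℕ → ℕ,
      (∀ t : ℝ, (U ℝ d).eval t ^ n =
        ∑ j ∈ Finset.range (d * n + 1), (α j : ℝ) * (U ℝ j).eval t) ∧
      ∑ j ∈ Finset.range (d * n + 1), α j ≤ (d + 1) ^ (n - 1) := by
  obtain ⟨α, hexp, hsum⟩ := aux_expansion d n hn
  refine ⟨α, fun t => ?_, hsum⟩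
  have := congrArg (Polynomial.eval t) hexp
  simpa [Polynomial.eval_finset_sum] using this
end
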